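/- arXiv:2202.02741 — 7 statements merged into one kernel-verified Lean document; each statement's English description precedes it below -/
import Mathlib

section
/- Let A be a real symmetric N×N matrix and B a real N×M matrix. The controllability matrix [B, AB, A²B, …, A^{N−1}B] has rank N (equivalently, the columns of the matrices A^k B for 0 ≤ k ≤ N−1 span ℝ^N) if and only if there is no nonzero vector y ∈ ℝ^N and real number λ with A y = λ y and Bᵀ y = 0. -/
/-! A row vector `y` annihilates the controllability matrix iff `Bᵀ (Aᵀ)ᵏ y = 0` for `k < N`,
and by Cayley–Hamilton then for every `k`; so full rank means that the unobservable subspace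
`⋂ₖ ker (Bᵀ (Aᵀ)ᵏ)` is trivial. That subspace is `Aᵀ`-invariant and contains every
eigenvector of `Aᵀ` lying in `ker Bᵀ`. For symmetric `A`, the restriction of `A` to a nonzero
invariant subspace is again symmetric, hence has an eigenvector, which lies in `ker Bᵀ`. -/

open Matrix Polynomial

namespace Matrix

theorem rank_eq_card_height_iff {m n K : Type*} [Field K] [Fintype m] [Fintype n]
    (C : Matrix m n K) :
    C.rank = Fintype.card m ↔ ∀ y, y ᵥ* C = 0 → y = 0 := by
  rw [rank_eq_finrank_span_row, ← Set.finrank, eq_comm,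
    ← linearIndependent_iff_card_eq_finrank_span, ← vecMul_injective_iff,
    ← coe_vecMulLinear, injective_iff_map_eq_zero]
  rfl

variable {m n : Type*} [Fintype n] [DecidableEq n]

section CommRing

variable {R : Type*} [CommRing R]

/-- By Cayley–Hamilton, `Aᵏ` is a polynomial in `A` of degree `< card n`. -/
theorem pow_mulVec_mem_span_pow_mulVec (A : Matrix n n R) (y : n → R) (k : ℕ) :
    A ^ k *ᵥ y ∈ Submodule.span R ((fun i => A ^ i *ᵥ y) '' Set.Iio (Fintype.card n)) := by
  rcases isEmpty_or_nonempty n with _ | _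
  · rw [Subsingleton.elim (A ^ k *ᵥ y) 0]
    exact Submodule.zero_mem _
  nontriviality R
  have hdeg : (X ^ k %ₘ A.charpoly).natDegree < Fintype.card n := by
    have hcard := A.charpoly_natDegree_eq_dim
    refine hcard ▸ natDegree_modByMonic_lt _ A.charpoly_monic fun h => ?_
    rw [h, natDegree_one] at hcard
    exact Fintype.card_ne_zero hcard.symm
  rw [pow_eq_aeval_mod_charpoly, aeval_eq_sum_range' hdeg, sum_mulVec]
  refine Submodule.sum_mem _ fun i hi => ?_
  rw [smul_mulVec]
  exact Submodule.smul_mem _ _ (Submodule.subset_span ⟨i, Finset.mem_range.mp hi, rfl⟩)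

def unobservableSubspace (A : Matrix n n R) (C : Matrix m n R) : Submodule R (n → R) :=
  ⨅ k : ℕ, LinearMap.ker (C * A ^ k).mulVecLin

def controllabilityMatrix (A : Matrix n n R) (B : Matrix n m R) (d : ℕ) :
    Matrix n (Fin d × m) R :=
  of fun i p => (A ^ (p.1 : ℕ) * B) i p.2

variable {A : Matrix n n R} {C : Matrix m n R} {y : n → R}

theorem mem_unobservableSubspace :
    y ∈ unobservableSubspace A C ↔ ∀ k : ℕ, C *ᵥ (A ^ k *ᵥ y) = 0 := by
  simp only [unobservableSubspace, Submodule.mem_iInf, LinearMap.mem_ker, mulVecLin_apply,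
    mulVec_mulVec]

theorem mulVec_mem_unobservableSubspace (hy : y ∈ unobservableSubspace A C) :
    A *ᵥ y ∈ unobservableSubspace A C := by
  rw [mem_unobservableSubspace] at hy ⊢
  intro k
  rw [mulVec_mulVec y, ← pow_succ, hy]

theorem mem_unobservableSubspace_of_mulVec_eq_smul {l : R} (hAy : A *ᵥ y = l • y)
    (hCy : C *ᵥ y = 0) : y ∈ unobservableSubspace A C := by
  have hpow (k : ℕ) : A ^ k *ᵥ y = l ^ k • y := by
    induction k with
    | zero => simp
    | succ k ih => rw [pow_succ', ← mulVec_mulVec, ih, mulVec_smul, hAy, smul_smul, pow_succ]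
  rw [mem_unobservableSubspace]
  intro k
  rw [hpow, mulVec_smul, hCy, smul_zero]

theorem vecMul_controllabilityMatrix_eq_zero_iff [Fintype m] (B : Matrix n m R) {d : ℕ}
    (hd : Fintype.card n ≤ d) :
    y ᵥ* controllabilityMatrix A B d = 0 ↔ y ∈ unobservableSubspace Aᵀ Bᵀ := by
  have hentry (k : ℕ) : Bᵀ *ᵥ (Aᵀ ^ k *ᵥ y) = y ᵥ* (A ^ k * B) := by
    rw [← transpose_pow, mulVec_mulVec, ← transpose_mul, mulVec_transpose]
  have hblocks :
      y ᵥ* controllabilityMatrix A B d = 0 ↔ ∀ k : Fin d, y ᵥ* (A ^ (k : ℕ) * B) = 0 := by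
    simp only [funext_iff, Prod.forall]
    rfl
  rw [hblocks, mem_unobservableSubspace]
  simp only [hentry]
  refine ⟨fun h k => ?_, fun h k => h k⟩
  have hspan : Submodule.span R ((fun i => Aᵀ ^ i *ᵥ y) '' Set.Iio (Fintype.card n)) ≤
      LinearMap.ker Bᵀ.mulVecLin := by
    rw [Submodule.span_le]
    rintro _ ⟨i, hi, rfl⟩
    rw [SetLike.mem_coe, LinearMap.mem_ker, mulVecLin_apply, hentry]
    exact h ⟨i, lt_of_lt_of_le hi hd⟩
  have hk := hspan (pow_mulVec_mem_span_pow_mulVec Aᵀ y k)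
  rwa [LinearMap.mem_ker, mulVecLin_apply, hentry] at hk

end CommRing

theorem rank_controllabilityMatrix_eq_card_iff {K : Type*} [Field K] [Fintype m]
    (A : Matrix n n K) (B : Matrix n m K) {d : ℕ} (hd : Fintype.card n ≤ d) :
    (controllabilityMatrix A B d).rank = Fintype.card n ↔
      unobservableSubspace Aᵀ Bᵀ = ⊥ := by
  rw [rank_eq_card_height_iff, Submodule.eq_bot_iff]
  simp only [vecMul_controllabilityMatrix_eq_zero_iff B hd]

end Matrix

theorem LinearMap.IsSymmetric.exists_eigenvector_mem {𝕜 E : Type*} [RCLike 𝕜]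
    [NormedAddCommGroup E] [InnerProductSpace 𝕜 E] [FiniteDimensional 𝕜 E]
    {T : E →ₗ[𝕜] E}
    (hT : T.IsSymmetric) {V : Submodule 𝕜 E} (hV : ∀ v ∈ V, T v ∈ V) (hV0 : V ≠ ⊥) :
    ∃ v ∈ V, v ≠ 0 ∧ ∃ μ : 𝕜, T v = μ • v := by
  have : Nontrivial V := Submodule.nontrivial_iff_ne_bot.mpr hV0
  obtain ⟨v, hv⟩ :=
    (hT.restrict_invariant hV).hasEigenvalue_iSup_of_finiteDimensional.exists_hasEigenvector
  exact ⟨v, v.2, by simpa using hv.2, _, congrArg Subtype.val hv.apply_eq_smul⟩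

namespace Matrix

variable {m n 𝕜 : Type*} [Fintype n] [DecidableEq n] [RCLike 𝕜] {A : Matrix n n 𝕜}

theorem IsHermitian.exists_eigenvector_mem (hA : A.IsHermitian) {W : Submodule 𝕜 (n → 𝕜)}
    (hW : ∀ v ∈ W, A *ᵥ v ∈ W) (hW0 : W ≠ ⊥) :
    ∃ v ∈ W, v ≠ 0 ∧ ∃ μ : 𝕜, A *ᵥ v = μ • v := by
  have hV0 : W.comap (WithLp.linearEquiv 2 𝕜 (n → 𝕜)).toLinearMap ≠ ⊥ := by
    rw [Ne, Submodule.eq_bot_iff] at hW0 ⊢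
    push Not at hW0 ⊢
    obtain ⟨y, hy, hy0⟩ := hW0
    exact ⟨WithLp.toLp 2 y, hy, by simpa using hy0⟩
  obtain ⟨x, hx, hx0, μ, hμ⟩ :=
    (isSymmetric_toEuclideanLin_iff.mpr hA).exists_eigenvector_mem (fun x hx => hW _ hx) hV0
  exact ⟨x.ofLp, hx, by simpa using hx0, μ, congrArg WithLp.ofLp hμ⟩

/-- The Popov–Belevitch–Hautus test, for Hermitian `A`. -/
theorem IsHermitian.unobservableSubspace_eq_bot_iff (hA : A.IsHermitian) (C : Matrix m n 𝕜) :
    unobservableSubspace A C = ⊥ ↔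
      ¬∃ (y : n → 𝕜) (l : 𝕜), y ≠ 0 ∧ A *ᵥ y = l • y ∧ C *ᵥ y = 0 := by
  constructor
  · rintro hW ⟨y, l, hy0, hAy, hCy⟩
    exact hy0 ((Submodule.eq_bot_iff _).mp hW y
      (mem_unobservableSubspace_of_mulVec_eq_smul hAy hCy))
  · intro h
    by_contra hW0
    obtain ⟨y, hy, hy0, l, hAy⟩ :=
      hA.exists_eigenvector_mem (fun _ => mulVec_mem_unobservableSubspace) hW0
    exact h ⟨y, l, hy0, hAy, by simpa using mem_unobservableSubspace.mp hy 0⟩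

end Matrix

/-- **Kalman rank condition / PBH test for symmetric matrices.**
For a real symmetric `N × N` matrix `A` and a real `N × M` matrix `B`, the
controllability matrix `[B, AB, A²B, …, A^{N−1}B]` has rank `N` if and only if
there is no nonzero vector `y` and real `λ` with `A y = λ y` and `Bᵀ y = 0`. -/
theorem stmt_0 (N M : ℕ) (A : Matrix (Fin N) (Fin N) ℝ) (B : Matrix (Fin N) (Fin M) ℝ)
    (hA : A.IsSymm) :
    (Matrix.of fun (i : Fin N) (p : Fin N × Fin M) => (A ^ (p.1 : ℕ) * B) i p.2).rank = N ↔
      ¬ ∃ (y : Fin N → ℝ) (l : ℝ), y ≠ 0 ∧ A *ᵥ y = l • y ∧ Bᵀ *ᵥ y = 0 := by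
  have hrank := rank_controllabilityMatrix_eq_card_iff A B (Fintype.card_fin N).le
  rw [Fintype.card_fin, hA.eq] at hrank
  exact hrank.trans ((isHermitian_iff_isSymm.mpr hA).unobservableSubspace_eq_bot_iff Bᵀ)
end

section
/- Let G be a finite connected simple undirected graph on vertex set V and let S ⊆ V with |S| ≥ 2. If for every vertex v ∈ V∖S either N_S(v) = ∅ or N_S(v) = S (i.e., every vertex outside S is adjacent either to no vertex of S or to every vertex of S), then S is a critical set: there exists a nonzero vector y ∈ ℝ^V and a real λ with L(G)y = λy and y_v = 0 for all v ∉ S. -/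
/-!
The vectors supported on `S` with zero sum form a subspace `W`, nonzero because `|S| ≥ 2`.
The Laplacian maps `W` into itself: its column sums vanish, and at a vertex `v ∉ S` we get
`(L y) v = -∑_{u ∈ N_S(v)} y u`, which is the empty sum or `-∑_{u ∈ S} y u = 0`. A symmetric
operator restricted to an invariant subspace is still symmetric, so it has an eigenvector there.
-/

open Matrix

theorem LinearMap.IsSymmetric.exists_apply_eq_smul_mem
    {𝕜 E : Type*} [RCLike 𝕜] [NormedAddCommGroup E] [InnerProductSpace 𝕜 E]
    [FiniteDimensional 𝕜 E] {T : E →ₗ[𝕜] E} (hT : T.IsSymmetric) {W : Submodule 𝕜 E}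
    (hW : ∀ x ∈ W, T x ∈ W) (hW0 : W ≠ ⊥) :
    ∃ μ : 𝕜, ∃ x ∈ W, x ≠ 0 ∧ T x = μ • x := by
  have : Nontrivial W := Submodule.nontrivial_iff_ne_bot.mpr hW0
  obtain ⟨x, hx⟩ :=
    (hT.restrict_invariant hW).hasEigenvalue_iSup_of_finiteDimensional.exists_hasEigenvector
  exact ⟨_, x, x.2, fun h => hx.2 (Subtype.ext h), congrArg Subtype.val hx.apply_eq_smul⟩

theorem Matrix.IsHermitian.exists_mulVec_eq_smul_mem
    {𝕜 n : Type*} [RCLike 𝕜] [Fintype n] [DecidableEq n] {A : Matrix n n 𝕜}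
    (hA : A.IsHermitian) {W : Submodule 𝕜 (n → 𝕜)} (hW : ∀ x ∈ W, A *ᵥ x ∈ W) (hW0 : W ≠ ⊥) :
    ∃ μ : 𝕜, ∃ x ∈ W, x ≠ 0 ∧ A *ᵥ x = μ • x := by
  set e := WithLp.linearEquiv 2 𝕜 (n → 𝕜)
  have hW0' : W.comap e.toLinearMap ≠ ⊥ := by
    simpa [Submodule.comap_equiv_eq_map_symm] using hW0
  obtain ⟨μ, x, hxW, hx0, hx⟩ := (isSymmetric_toEuclideanLin_iff.mpr hA).exists_apply_eq_smul_mem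
      (W := W.comap e.toLinearMap) (fun x hx => hW _ hx) hW0'
  exact ⟨μ, e x, hxW, by simpa using hx0, by simpa [e, ofLp_toLpLin] using congrArg e hx⟩

section

variable {V R : Type*} [Fintype V]

def Finset.zeroSumSupportedOn (R : Type*) [CommRing R] (S : Finset V) : Submodule R (V → R) where
  carrier := {x | (∀ v ∉ S, x v = 0) ∧ ∑ v, x v = 0}
  add_mem' {x y} hx hy := ⟨fun v hv => by simp [hx.1 v hv, hy.1 v hv],
    by simp [Finset.sum_add_distrib, hx.2, hy.2]⟩
  zero_mem' := ⟨fun _ _ => rfl, by simp⟩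
  smul_mem' c x hx := ⟨fun v hv => by simp [hx.1 v hv], by simp [← Finset.mul_sum, hx.2]⟩

namespace Finset

variable [CommRing R] {S : Finset V}

theorem sum_eq_zero_of_mem_zeroSumSupportedOn {x : V → R} (hx : x ∈ S.zeroSumSupportedOn R) :
    ∑ v ∈ S, x v = 0 := by
  rw [← hx.2]
  exact Finset.sum_subset (Finset.subset_univ S) fun v _ hv => hx.1 v hv

theorem zeroSumSupportedOn_ne_bot [DecidableEq V] [Nontrivial R] (hS : 2 ≤ S.card) :
    S.zeroSumSupportedOn R ≠ ⊥ := by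
  obtain ⟨a, ha, b, hb, hab⟩ := Finset.one_lt_card.mp hS
  refine (Submodule.ne_bot_iff _).mpr ⟨Pi.single a 1 - Pi.single b 1, ⟨fun v hv => ?_, ?_⟩, ?_⟩
  · simp [ne_of_mem_of_not_mem ha hv |>.symm, ne_of_mem_of_not_mem hb hv |>.symm]
  · simp [Finset.sum_sub_distrib]
  · intro h
    simpa [Pi.single_apply, hab] using congrFun h a

end Finset

namespace SimpleGraph

variable [DecidableEq V] [CommRing R] (G : SimpleGraph V) [DecidableRel G.Adj]

theorem sum_lapMatrix_mulVec (x : V → R) : ∑ v, (G.lapMatrix R *ᵥ x) v = 0 := by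
  calc ∑ v, (G.lapMatrix R *ᵥ x) v = (fun _ => 1) ⬝ᵥ (G.lapMatrix R *ᵥ x) := by
        simp [dotProduct]
    _ = (G.lapMatrix R *ᵥ fun _ => 1) ⬝ᵥ x := by
        rw [dotProduct_mulVec, ← mulVec_transpose, (G.isSymm_lapMatrix R).eq]
    _ = 0 := by rw [G.lapMatrix_mulVec_const_eq_zero, zero_dotProduct]

theorem lapMatrix_mulVec_apply_eq_zero {S : Finset V} {x : V → R}
    (hx : x ∈ S.zeroSumSupportedOn R) {v : V} (hv : v ∉ S)
    (hvS : S.filter (fun u => G.Adj v u) = ∅ ∨ S.filter (fun u => G.Adj v u) = S) :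
    (G.lapMatrix R *ᵥ x) v = 0 := by
  have hN : ∑ u ∈ G.neighborFinset v, x u = ∑ u ∈ S.filter (G.Adj v), x u := by
    refine (Finset.sum_subset (fun u hu => by simpa using (Finset.mem_filter.mp hu).2)
      fun u hu huS => hx.1 u fun h => huS ?_).symm
    simpa [h] using hu
  rw [lapMatrix_mulVec_apply, hx.1 v hv, mul_zero, zero_sub, neg_eq_zero, hN]
  rcases hvS with h | h <;> rw [h]
  · exact Finset.sum_empty
  · exact Finset.sum_eq_zero_of_mem_zeroSumSupportedOn hx

theorem lapMatrix_mulVec_mem_zeroSumSupportedOn {S : Finset V}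
    (h : ∀ v ∉ S, S.filter (fun u => G.Adj v u) = ∅ ∨ S.filter (fun u => G.Adj v u) = S)
    {x : V → R} (hx : x ∈ S.zeroSumSupportedOn R) :
    G.lapMatrix R *ᵥ x ∈ S.zeroSumSupportedOn R :=
  ⟨fun v hv => G.lapMatrix_mulVec_apply_eq_zero hx hv (h v hv), G.sum_lapMatrix_mulVec x⟩

end SimpleGraph

end

theorem stmt_4_general {V : Type*} [Fintype V] [DecidableEq V] (G : SimpleGraph V) [DecidableRel G.Adj]
    (S : Finset V) (hS : 2 ≤ S.card)
    (h : ∀ v ∉ S, S.filter (fun u => G.Adj v u) = ∅ ∨ S.filter (fun u => G.Adj v u) = S) :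
    ∃ (y : V → ℝ) (l : ℝ), y ≠ 0 ∧ G.lapMatrix ℝ *ᵥ y = l • y ∧ ∀ v ∉ S, y v = 0 := by
  obtain ⟨l, y, hyS, hy0, hy⟩ := (G.isHermitian_lapMatrix ℝ).exists_mulVec_eq_smul_mem
    (fun _ hx => G.lapMatrix_mulVec_mem_zeroSumSupportedOn h hx)
    (Finset.zeroSumSupportedOn_ne_bot hS)
  exact ⟨y, l, hy0, hy, hyS.1⟩

/-- **Theorem 1.** If every vertex outside `S` (with `|S| ≥ 2`) is adjacent either to no
vertex of `S` or to every vertex of `S`, then `S` is a critical set: some Laplacian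
eigenvector vanishes everywhere outside `S`. -/
theorem stmt_4 {V : Type*} [Fintype V] [DecidableEq V] (G : SimpleGraph V) [DecidableRel G.Adj]
    (hconn : G.Connected) (S : Finset V) (hS : 2 ≤ S.card)
    (h : ∀ v ∉ S, S.filter (fun u => G.Adj v u) = ∅ ∨ S.filter (fun u => G.Adj v u) = S) :
    ∃ (y : V → ℝ) (l : ℝ), y ≠ 0 ∧ G.lapMatrix ℝ *ᵥ y = l • y ∧ ∀ v ∉ S, y v = 0 :=
  stmt_4_general G S hS h
end

section
/- Let G be a finite connected simple undirected graph on vertex set V and let S ⊆ V with |S| = 2. Then S is a minimal perfect critical set if and only if for every vertex v ∈ V∖S, either N_S(v) = ∅ or N_S(v) = S (i.e., every vertex outside S is adjacent to both vertices of S or to neither). -/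
open Matrix

/-- `S` is a perfect critical set of `G`: `S` is nonempty and some Laplacian eigenvector
vanishes at every vertex outside `S` and is nonzero at every vertex of `S`. -/
def IsPerfectCriticalSet {V : Type*} [Fintype V] [DecidableEq V]
    (G : SimpleGraph V) [DecidableRel G.Adj] (S : Finset V) : Prop :=
  S.Nonempty ∧ ∃ (y : V → ℝ) (l : ℝ), y ≠ 0 ∧ G.lapMatrix ℝ *ᵥ y = l • y ∧
    (∀ v ∉ S, y v = 0) ∧ ∀ v ∈ S, y v ≠ 0

/-- A perfect critical set is minimal if no proper (nonempty) subset of it is a perfect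
critical set. -/
def IsMinimalPerfectCriticalSet {V : Type*} [Fintype V] [DecidableEq V]
    (G : SimpleGraph V) [DecidableRel G.Adj] (S : Finset V) : Prop :=
  IsPerfectCriticalSet G S ∧ ∀ T ⊂ S, ¬ IsPerfectCriticalSet G T

/-- Sum of a function supported on `S` over a neighborhood. -/
lemma sum_nbhd_eq {V : Type*} [Fintype V] [DecidableEq V] (G : SimpleGraph V)
    [DecidableRel G.Adj] (y : V → ℝ) (S : Finset V) (h0 : ∀ v ∉ S, y v = 0) (w : V) :
    ∑ x ∈ G.neighborFinset w, y x = ∑ x ∈ S, if G.Adj w x then y x else 0 := by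
  rw [SimpleGraph.neighborFinset_eq_filter, Finset.sum_filter]
  refine (Finset.sum_subset S.subset_univ ?_).symm
  intro x _ hx
  simp [h0 x hx]

/-- In a connected graph with at least two vertices, every vertex has a neighbor. -/
lemma exists_adj_of_conn {V : Type*} (G : SimpleGraph V) (hconn : G.Connected)
    (u w0 : V) (hne : u ≠ w0) : ∃ w, G.Adj u w := by
  obtain ⟨p⟩ := hconn.preconnected u w0
  exact ⟨p.getVert 1, p.adj_snd (SimpleGraph.Walk.not_nil_of_ne hne)⟩

/-- **Theorem 2.** A two-element set `S` in a connected graph is a minimal perfect critical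
set iff every vertex outside `S` is adjacent to both vertices of `S` or to neither. -/
theorem stmt_6 {V : Type*} [Fintype V] [DecidableEq V] (G : SimpleGraph V) [DecidableRel G.Adj]
    (hconn : G.Connected) (S : Finset V) (hS : S.card = 2) :
    IsMinimalPerfectCriticalSet G S ↔
      ∀ v ∉ S, S.filter (fun u => G.Adj v u) = ∅ ∨ S.filter (fun u => G.Adj v u) = S := by
  obtain ⟨a, b, hab, rfl⟩ := Finset.card_eq_two.mp hS
  constructor
  · rintro ⟨⟨-, y, l, hy0, heig, hout, hin⟩, -⟩ v hv
    have hva' : v ≠ a := by rintro rfl; simp at hv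
    have hvb' : v ≠ b := by rintro rfl; simp at hv
    have hyv : y v = 0 := hout v hv
    have h1 : (G.lapMatrix ℝ *ᵥ y) v = l * y v := by rw [heig]; simp
    rw [G.lapMatrix_mulVec_apply, sum_nbhd_eq G y _ hout, Finset.sum_pair hab, hyv] at h1
    have h2 : (if G.Adj v a then y a else 0) + (if G.Adj v b then y b else 0) = 0 := by
      linarith
    have hya := hin a (by simp)
    have hyb := hin b (by simp)
    by_cases hva : G.Adj v a <;> by_cases hvb : G.Adj v b
    · right
      apply Finset.filter_true_of_mem
      intro x hx
      rcases Finset.mem_insert.mp hx with rfl | hx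
      · exact hva
      · rw [Finset.mem_singleton.mp hx]; exact hvb
    · exact absurd (by simpa [hva, hvb] using h2) hya
    · exact absurd (by simpa [hva, hvb] using h2) hyb
    · left
      apply Finset.filter_false_of_mem
      intro x hx
      rcases Finset.mem_insert.mp hx with rfl | hx
      · exact hva
      · rw [Finset.mem_singleton.mp hx]; exact hvb
  · intro h
    have key : ∀ v, v ∉ ({a, b} : Finset V) → (G.Adj v a ↔ G.Adj v b) := by
      intro v hv
      rcases h v hv with hf | hf
      · constructor <;> intro hadj
        · exfalso
          have hmem : a ∈ Finset.filter (fun u => G.Adj v u) {a, b} :=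
            Finset.mem_filter.mpr ⟨by simp, hadj⟩
          rw [hf] at hmem
          exact Finset.notMem_empty a hmem
        · exfalso
          have hmem : b ∈ Finset.filter (fun u => G.Adj v u) {a, b} :=
            Finset.mem_filter.mpr ⟨by simp, hadj⟩
          rw [hf] at hmem
          exact Finset.notMem_empty b hmem
      · constructor <;> intro _
        · have := hf ▸ (Finset.mem_insert_of_mem (Finset.mem_singleton_self b) :
            b ∈ ({a, b} : Finset V))
          exact (Finset.mem_filter.mp this).2
        · have := hf ▸ (Finset.mem_insert_self a {b} : a ∈ ({a, b} : Finset V))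
          exact (Finset.mem_filter.mp this).2
    set y : V → ℝ := fun v => if v = a then 1 else if v = b then -1 else 0 with hy
    have hyout : ∀ v ∉ ({a, b} : Finset V), y v = 0 := by
      intro v hv
      have h1 : v ≠ a := by rintro rfl; simp at hv
      have h2 : v ≠ b := by rintro rfl; simp at hv
      simp [hy, h1, h2]
    have hya : y a = 1 := by simp [hy]
    have hyb : y b = -1 := by simp [hy, hab.symm]
    have hdeg : (G.degree a : ℝ) = G.degree b := by
      have hd : ∀ v : V, (G.degree v : ℝ) = ∑ u, if G.Adj v u then (1 : ℝ) else 0 := by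
        intro v
        rw [← SimpleGraph.card_neighborFinset_eq_degree, SimpleGraph.neighborFinset_eq_filter]
        push_cast [Finset.card_filter]
        simp
      rw [hd a, hd b]
      refine Finset.sum_equiv (Equiv.swap a b) (by simp) ?_
      intro i _
      rcases eq_or_ne i a with rfl | hia
      · simp [Equiv.swap_apply_left, G.adj_comm]
      rcases eq_or_ne i b with rfl | hib
      · simp [Equiv.swap_apply_right, G.adj_comm]
      · have hi : i ∉ ({a, b} : Finset V) := by simp [hia, hib]
        have := key i hi
        rw [Equiv.swap_apply_of_ne_of_ne hia hib]
        simp only [G.adj_comm a i, G.adj_comm b i]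
        exact if_congr this rfl rfl
    refine ⟨⟨⟨a, by simp⟩, y, (G.degree a : ℝ) + (if G.Adj a b then 1 else 0), ?_, ?_, hyout, ?_⟩,
      ?_⟩
    · intro h0
      have := congrFun h0 a
      rw [hya] at this
      norm_num at this
    · funext v
      rw [G.lapMatrix_mulVec_apply, sum_nbhd_eq G y _ hyout, Finset.sum_pair hab]
      by_cases hva : v = a
      · subst hva
        simp only [Pi.smul_apply, smul_eq_mul, hya, hyb, G.irrefl]
        by_cases hadj : G.Adj v b <;> simp [hadj]
      by_cases hvb : v = b
      · subst hvb
        simp only [Pi.smul_apply, smul_eq_mul, hya, hyb, G.irrefl, if_false]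
        by_cases hadj : G.Adj a v
        · rw [if_pos hadj.symm, if_pos hadj, hdeg]; ring
        · rw [if_neg (fun hh => hadj hh.symm), if_neg hadj, hdeg]; ring
      · have hv : v ∉ ({a, b} : Finset V) := by simp [hva, hvb]
        have h0 : y v = 0 := hyout v hv
        have hk := key v hv
        rw [h0, hya, hyb]
        by_cases hadj : G.Adj v a
        · simp [hadj, hk.mp hadj, Pi.smul_apply, h0]
        · have hb : ¬ G.Adj v b := fun hb => hadj (hk.mpr hb)
          simp [hadj, hb, Pi.smul_apply, h0]
    · intro v hv
      rcases Finset.mem_insert.mp hv with rfl | hv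
      · rw [hya]; norm_num
      · rw [Finset.mem_singleton.mp hv, hyb]; norm_num
    · rintro T hT ⟨hTne, z, l, hz0, heig, hout, hin⟩
      have hcard : T.card < 2 := by
        have := Finset.card_lt_card hT
        omega
      have hcard1 : T.card = 1 := by
        have := Finset.card_pos.mpr hTne
        omega
      obtain ⟨u, rfl⟩ := Finset.card_eq_one.mp hcard1
      have hw0 : ∃ w0 : V, u ≠ w0 := by
        rcases eq_or_ne u a with rfl | h'
        · exact ⟨b, hab⟩
        · exact ⟨a, h'⟩
      obtain ⟨w0, hw0⟩ := hw0
      obtain ⟨w, hadj⟩ := exists_adj_of_conn G hconn u w0 hw0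
      have hwu : w ≠ u := (G.ne_of_adj hadj).symm
      have hzw : z w = 0 := hout w (by simp [hwu])
      have h1 : (G.lapMatrix ℝ *ᵥ z) w = l * z w := by rw [heig]; simp
      rw [G.lapMatrix_mulVec_apply, sum_nbhd_eq G z _ hout, Finset.sum_singleton, hzw] at h1
      rw [if_pos hadj.symm] at h1
      have : z u = 0 := by linarith
      exact hin u (Finset.mem_singleton_self u) this
end

section
/- Let G be a finite connected simple undirected graph on vertex set V and let S ⊆ V with |S| = 3. Then S is not a minimal perfect critical set; that is, if S is a perfect critical set with |S| = 3, then some proper nonempty subset of S (in fact, some two-element subset of S) is itself a perfect critical set. -/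
open Matrix

set_option linter.unusedSectionVars false
set_option maxHeartbeats 1000000

namespace PCSAux
open Finset
variable {V : Type*} [Fintype V] [DecidableEq V] {G : SimpleGraph V} [DecidableRel G.Adj]

noncomputable def ew (G : SimpleGraph V) [DecidableRel G.Adj] (u v : V) : ℝ :=
  if G.Adj u v then 1 else 0
lemma ew_nonneg (u v : V) : 0 ≤ ew G u v := by unfold ew; positivity
lemma ew_symm (u v : V) : ew G u v = ew G v u := by unfold ew; simp [SimpleGraph.adj_comm]
lemma ew_self (u : V) : ew G u u = 0 := by simp [ew]
lemma neighbor_sum (y : V → ℝ) (w : V) :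
    ∑ u ∈ G.neighborFinset w, y u = ∑ u, ew G w u * y u := by
  rw [SimpleGraph.neighborFinset_eq_filter, sum_filter]
  refine sum_congr rfl fun u _ => ?_
  unfold ew; by_cases h : G.Adj w u <;> simp [h]
lemma degree_sum (p : V) : (G.degree p : ℝ) = ∑ v, ew G p v := by
  rw [← SimpleGraph.card_neighborFinset_eq_degree, SimpleGraph.neighborFinset_eq_filter,
    card_filter]
  push_cast
  refine sum_congr rfl fun u _ => ?_
  unfold ew; by_cases h : G.Adj p u <;> simp [h]
lemma eigen_eq {a b c : V} (hab : a ≠ b) (hac : a ≠ c) (hbc : b ≠ c)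
    {y : V → ℝ} {l : ℝ} (heig : G.lapMatrix ℝ *ᵥ y = l • y)
    (hout : ∀ v ∉ ({a, b, c} : Finset V), y v = 0) (p : V) :
    (G.degree p : ℝ) * y p - (ew G p a * y a + ew G p b * y b + ew G p c * y c) = l * y p := by
  have h := congrFun heig p
  rw [SimpleGraph.lapMatrix_mulVec_apply, neighbor_sum] at h
  have hsum : ∑ u, ew G p u * y u = ∑ u ∈ ({a, b, c} : Finset V), ew G p u * y u := by
    refine (sum_subset (subset_univ _) fun u _ hu => ?_).symm
    rw [hout u hu, mul_zero]
  rw [hsum, show ({a, b, c} : Finset V) = insert a (insert b {c}) from rfl,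
    sum_insert (by simp [hab, hac]), sum_insert (by simp [hbc]), sum_singleton] at h
  simp only [Pi.smul_apply, smul_eq_mul] at h
  linarith
lemma degree_decomp {a b c : V} (hab : a ≠ b) (hac : a ≠ c) (hbc : b ≠ c) (p : V) :
    (G.degree p : ℝ) = (∑ v ∈ univ \ ({a, b, c} : Finset V), ew G v p)
      + (ew G p a + ew G p b + ew G p c) := by
  rw [degree_sum p,
    show (∑ v, ew G p v) = ∑ v, ew G v p from sum_congr rfl fun v _ => ew_symm p v,
    ← sum_sdiff (subset_univ ({a, b, c} : Finset V)),
    show ({a, b, c} : Finset V) = insert a (insert b {c}) from rfl,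
    sum_insert (by simp [hab, hac]), sum_insert (by simp [hbc]), sum_singleton,
    ew_symm a p, ew_symm b p, ew_symm c p]
  ring
lemma one_le_N {S : Finset V} {q v0 : V} (hv0 : v0 ∉ S) (hadj : G.Adj v0 q) :
    (1 : ℝ) ≤ ∑ v ∈ univ \ S, ew G v q := by
  have hm : v0 ∈ univ \ S := by simp [hv0]
  have := Finset.single_le_sum (f := fun v => ew G v q) (fun v _ => ew_nonneg v q) hm
  simpa [ew, hadj] using this
lemma N_nonneg {S : Finset V} (q : V) : (0 : ℝ) ≤ ∑ v ∈ univ \ S, ew G v q :=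
  sum_nonneg fun v _ => ew_nonneg v q

lemma outside_eq {a b c : V} (hab : a ≠ b) (hac : a ≠ c) (hbc : b ≠ c)
    {y : V → ℝ} {l : ℝ} (heig : G.lapMatrix ℝ *ᵥ y = l • y)
    (hout : ∀ v ∉ ({a, b, c} : Finset V), y v = 0)
    {v : V} (hv : v ∉ ({a, b, c} : Finset V)) :
    ew G v a * y a + ew G v b * y b + ew G v c * y c = 0 := by
  have h := eigen_eq hab hac hbc heig hout v
  rw [hout v hv] at h
  linarith

/-- Contradiction case: `y b = y c = -(y a)` and some outside vertex is adjacent to `b`. -/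
lemma contra1 {a b c : V} (hab : a ≠ b) (hac : a ≠ c) (hbc : b ≠ c)
    {y : V → ℝ} {l : ℝ} (heig : G.lapMatrix ℝ *ᵥ y = l • y)
    (hout : ∀ v ∉ ({a, b, c} : Finset V), y v = 0)
    (ha : y a ≠ 0)
    (hyb : y b = -(y a)) (hyc : y c = -(y a))
    {v0 : V} (hv0 : v0 ∉ ({a, b, c} : Finset V)) (h0b : G.Adj v0 b) : False := by
  have hpt : ∀ v ∉ ({a, b, c} : Finset V), ew G v a = ew G v b + ew G v c := by
    intro v hv
    have h1 := outside_eq hab hac hbc heig hout hv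
    have h2 : (ew G v a - ew G v b - ew G v c) * y a = 0 := by
      linear_combination h1 - ew G v b * hyb - ew G v c * hyc
    rcases mul_eq_zero.mp h2 with h3 | h3
    · linarith
    · exact absurd h3 ha
  have hN : ∑ v ∈ univ \ ({a, b, c} : Finset V), ew G v a
      = (∑ v ∈ univ \ ({a, b, c} : Finset V), ew G v b)
        + ∑ v ∈ univ \ ({a, b, c} : Finset V), ew G v c := by
    rw [← sum_add_distrib]
    refine sum_congr rfl fun v hv => ?_
    simp only [mem_sdiff, mem_univ, true_and] at hv
    exact hpt v hv
  have hea := eigen_eq hab hac hbc heig hout a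
  have heb := eigen_eq hab hac hbc heig hout b
  have hec := eigen_eq hab hac hbc heig hout c
  rw [degree_decomp hab hac hbc a, ew_self a, hyb, hyc] at hea
  rw [degree_decomp hab hac hbc b, ew_self b, ew_symm b a, hyb, hyc] at heb
  rw [degree_decomp hab hac hbc c, ew_self c, ew_symm c a, ew_symm c b, hyb, hyc] at hec
  have hla : (∑ v ∈ univ \ ({a, b, c} : Finset V), ew G v a)
      + 2 * ew G a b + 2 * ew G a c = l :=
    mul_right_cancel₀ ha (by linear_combination hea)
  have hlb : (∑ v ∈ univ \ ({a, b, c} : Finset V), ew G v b) + 2 * ew G a b = l :=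
    mul_right_cancel₀ ha (by linear_combination -heb)
  have hlc : (∑ v ∈ univ \ ({a, b, c} : Finset V), ew G v c) + 2 * ew G a c = l :=
    mul_right_cancel₀ ha (by linear_combination -hec)
  have h1 : (1 : ℝ) ≤ ∑ v ∈ univ \ ({a, b, c} : Finset V), ew G v b := one_le_N hv0 h0b
  have h2 := N_nonneg (G := G) (S := ({a, b, c} : Finset V)) c
  have h3 := ew_nonneg (G := G) a b
  have h4 := ew_nonneg (G := G) a c
  linarith

/-- Contradiction case: `y b = -(y a)`, all outside vertices see `a` and `b` alike,
no outside vertex sees `c`, and `c` is adjacent to `a` but not `b`. -/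
lemma contra2 {a b c : V} (hab : a ≠ b) (hac : a ≠ c) (hbc : b ≠ c)
    {y : V → ℝ} {l : ℝ} (heig : G.lapMatrix ℝ *ᵥ y = l • y)
    (hout : ∀ v ∉ ({a, b, c} : Finset V), y v = 0)
    (ha : y a ≠ 0)
    (hyb : y b = -(y a))
    (huni : ∀ v ∉ ({a, b, c} : Finset V), (G.Adj v a ↔ G.Adj v b))
    (hnc : ∀ v ∉ ({a, b, c} : Finset V), ¬ G.Adj v c)
    (hca : G.Adj c a) (hcb : ¬ G.Adj c b)
    {v0 : V} (hv0 : v0 ∉ ({a, b, c} : Finset V)) (h0a : G.Adj v0 a) : False := by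
  have hNab : ∑ v ∈ univ \ ({a, b, c} : Finset V), ew G v a
      = ∑ v ∈ univ \ ({a, b, c} : Finset V), ew G v b := by
    refine sum_congr rfl fun v hv => ?_
    simp only [mem_sdiff, mem_univ, true_and] at hv
    unfold ew
    by_cases h : G.Adj v a
    · rw [if_pos h, if_pos ((huni v hv).mp h)]
    · rw [if_neg h, if_neg (fun hh => h ((huni v hv).mpr hh))]
  have hNc : ∑ v ∈ univ \ ({a, b, c} : Finset V), ew G v c = 0 := by
    refine sum_eq_zero fun v hv => ?_
    simp only [mem_sdiff, mem_univ, true_and] at hv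
    unfold ew
    rw [if_neg (hnc v hv)]
  have heac : ew G a c = 1 := by unfold ew; rw [if_pos hca.symm]
  have hebc : ew G b c = 0 := by unfold ew; rw [if_neg (fun h => hcb h.symm)]
  have hea := eigen_eq hab hac hbc heig hout a
  have heb := eigen_eq hab hac hbc heig hout b
  have hec := eigen_eq hab hac hbc heig hout c
  rw [degree_decomp hab hac hbc a, ew_self a, heac, hyb] at hea
  rw [degree_decomp hab hac hbc b, ew_self b, ew_symm b a, hebc, ← hNab, hyb] at heb
  rw [degree_decomp hab hac hbc c, ew_self c, ew_symm c a, ew_symm c b, heac, hebc, hNc,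
    hyb] at hec
  have hl : (∑ v ∈ univ \ ({a, b, c} : Finset V), ew G v a) + 2 * ew G a b = l :=
    mul_right_cancel₀ ha (by linear_combination -heb)
  have hyc : y c = y a := by linear_combination -hea + y a * hl
  have h6 : l * y a = 0 := by linear_combination -hec + (1 - l) * hyc
  rcases mul_eq_zero.mp h6 with h7 | h7
  · have h1 : (1 : ℝ) ≤ ∑ v ∈ univ \ ({a, b, c} : Finset V), ew G v a := one_le_N hv0 h0a
    have h3 := ew_nonneg (G := G) a b
    linarith
  · exact ha h7


lemma set_perm1 {a b c : V} : ({a, c, b} : Finset V) = {a, b, c} := by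
  ext x; simp only [mem_insert, mem_singleton]; tauto

lemma set_perm2 {a b c : V} : ({b, a, c} : Finset V) = {a, b, c} := by
  ext x; simp only [mem_insert, mem_singleton]; tauto

lemma set_perm3 {a b c : V} : ({b, c, a} : Finset V) = {a, b, c} := by
  ext x; simp only [mem_insert, mem_singleton]; tauto

/-- Main case: some outside vertex is adjacent to `a` and `b` but not `c`. -/
lemma pair_case {a b c : V} (hab : a ≠ b) (hac : a ≠ c) (hbc : b ≠ c)
    {y : V → ℝ} {l : ℝ} (heig : G.lapMatrix ℝ *ᵥ y = l • y)
    (hout : ∀ v ∉ ({a, b, c} : Finset V), y v = 0)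
    (ha : y a ≠ 0) (hb : y b ≠ 0) (hc : y c ≠ 0)
    {v0 : V} (hv0 : v0 ∉ ({a, b, c} : Finset V))
    (h0a : G.Adj v0 a) (h0b : G.Adj v0 b) (h0c : ¬ G.Adj v0 c) :
    ∃ u w, u ≠ w ∧ u ∈ ({a, b, c} : Finset V) ∧ w ∈ ({a, b, c} : Finset V) ∧
      ∀ x, x ≠ u → x ≠ w → (G.Adj x u ↔ G.Adj x w) := by
  have hout' : ∀ v ∉ ({b, a, c} : Finset V), y v = 0 := by rw [set_perm2]; exact hout
  have h0 := outside_eq hab hac hbc heig hout hv0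
  rw [show ew G v0 a = 1 from if_pos h0a, show ew G v0 b = 1 from if_pos h0b,
    show ew G v0 c = 0 from if_neg h0c] at h0
  have hyb : y b = -(y a) := by linarith
  by_cases hcc : ∃ v1, v1 ∉ ({a, b, c} : Finset V) ∧ G.Adj v1 c
  · obtain ⟨v1, hv1, h1c⟩ := hcc
    have h1 := outside_eq hab hac hbc heig hout hv1
    rw [show ew G v1 c = 1 from if_pos h1c] at h1
    by_cases h1a : G.Adj v1 a <;> by_cases h1b : G.Adj v1 b
    · rw [show ew G v1 a = 1 from if_pos h1a, show ew G v1 b = 1 from if_pos h1b] at h1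
      exact absurd (by linarith) hc
    · rw [show ew G v1 a = 1 from if_pos h1a, show ew G v1 b = 0 from if_neg h1b] at h1
      exact absurd (contra1 hab hac hbc heig hout ha hyb (by linarith) hv0 h0b) not_false
    · rw [show ew G v1 a = 0 from if_neg h1a, show ew G v1 b = 1 from if_pos h1b] at h1
      refine absurd (contra1 hab.symm hbc hac heig hout' hb ?_ ?_ ?_ h0a) not_false
      · linarith
      · linarith
      · rw [set_perm2]; exact hv0
    · rw [show ew G v1 a = 0 from if_neg h1a, show ew G v1 b = 0 from if_neg h1b] at h1
      exact absurd (by linarith) hc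
  · push_neg at hcc
    have huni : ∀ v ∉ ({a, b, c} : Finset V), (G.Adj v a ↔ G.Adj v b) := by
      intro v hv
      have h1 := outside_eq hab hac hbc heig hout hv
      rw [show ew G v c = 0 from if_neg (hcc v hv)] at h1
      constructor
      · intro hva
        by_contra hvb
        rw [show ew G v a = 1 from if_pos hva, show ew G v b = 0 from if_neg hvb] at h1
        exact ha (by linarith)
      · intro hvb
        by_contra hva
        rw [show ew G v a = 0 from if_neg hva, show ew G v b = 1 from if_pos hvb] at h1
        exact hb (by linarith)
    by_cases hcab : G.Adj c a ↔ G.Adj c b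
    · refine ⟨a, b, hab, by simp, by simp, fun x hxa hxb => ?_⟩
      by_cases hxc : x = c
      · rw [hxc]; exact hcab
      · exact huni x (by simp [hxa, hxb, hxc])
    · by_cases hca : G.Adj c a
      · have hcb : ¬ G.Adj c b := fun h => hcab ⟨fun _ => h, fun _ => hca⟩
        exact absurd (contra2 hab hac hbc heig hout ha hyb huni hcc hca hcb hv0 h0a) not_false
      · have hcb : G.Adj c b := by tauto
        refine absurd (contra2 hab.symm hbc hac heig hout' hb ?_ ?_ ?_ hcb hca ?_ h0b) not_false
        · linarith
        · intro v hv
          rw [set_perm2] at hv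
          exact (huni v hv).symm
        · intro v hv
          rw [set_perm2] at hv
          exact hcc v hv
        · rw [set_perm2]; exact hv0

/-- There are two twin vertices among the support `{a, b, c}`. -/
lemma exists_twin {a b c : V} (hab : a ≠ b) (hac : a ≠ c) (hbc : b ≠ c)
    {y : V → ℝ} {l : ℝ} (heig : G.lapMatrix ℝ *ᵥ y = l • y)
    (hout : ∀ v ∉ ({a, b, c} : Finset V), y v = 0)
    (ha : y a ≠ 0) (hb : y b ≠ 0) (hc : y c ≠ 0) :
    ∃ u w, u ≠ w ∧ u ∈ ({a, b, c} : Finset V) ∧ w ∈ ({a, b, c} : Finset V) ∧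
      ∀ x, x ≠ u → x ≠ w → (G.Adj x u ↔ G.Adj x w) := by
  by_cases huniform : ∀ v ∉ ({a, b, c} : Finset V),
      ((G.Adj v a ↔ G.Adj v b) ∧ (G.Adj v a ↔ G.Adj v c))
  · -- pigeonhole on the three internal adjacencies
    by_cases h1 : G.Adj c a ↔ G.Adj c b
    · refine ⟨a, b, hab, by simp, by simp, fun x hxa hxb => ?_⟩
      by_cases hxc : x = c
      · rw [hxc]; exact h1
      · exact (huniform x (by simp [hxa, hxb, hxc])).1
    · by_cases h2 : G.Adj b a ↔ G.Adj b c
      · refine ⟨a, c, hac, by simp, by simp, fun x hxa hxc => ?_⟩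
        by_cases hxb : x = b
        · rw [hxb]; exact h2
        · exact (huniform x (by simp [hxa, hxb, hxc])).2
      · -- then Adj a b ↔ Adj a c, twins b c
        have hsym1 : G.Adj c a ↔ G.Adj a c := G.adj_comm c a
        have hsym2 : G.Adj c b ↔ G.Adj b c := G.adj_comm c b
        have hsym3 : G.Adj b a ↔ G.Adj a b := G.adj_comm b a
        have h3 : G.Adj a b ↔ G.Adj a c := by tauto
        refine ⟨b, c, hbc, by simp, by simp, fun x hxb hxc => ?_⟩
        by_cases hxa : x = a
        · rw [hxa]; exact h3
        · have := huniform x (by simp [hxa, hxb, hxc])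
          tauto
  · push_neg at huniform
    obtain ⟨v0, hv0, hmix⟩ := huniform
    have hout1 : ∀ v ∉ ({a, c, b} : Finset V), y v = 0 := by rw [set_perm1]; exact hout
    have hout3 : ∀ v ∉ ({b, c, a} : Finset V), y v = 0 := by rw [set_perm3]; exact hout
    have h0 := outside_eq hab hac hbc heig hout hv0
    by_cases hva : G.Adj v0 a <;> by_cases hvb : G.Adj v0 b <;> by_cases hvc : G.Adj v0 c
    · exact absurd hmix (by tauto)
    · exact pair_case hab hac hbc heig hout ha hb hc hv0 hva hvb hvc
    · -- pattern {a,c}: use roles (a, c, b)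
      obtain ⟨u, w, huw, hu, hw, ht⟩ :=
        pair_case hac hab hbc.symm heig hout1 ha hc hb
          (v0 := v0) (by rw [set_perm1]; exact hv0) hva hvc hvb
      rw [set_perm1] at hu hw
      exact ⟨u, w, huw, hu, hw, ht⟩
    · rw [show ew G v0 a = 1 from if_pos hva, show ew G v0 b = 0 from if_neg hvb,
        show ew G v0 c = 0 from if_neg hvc] at h0
      exact absurd (by linarith) ha
    · -- pattern {b,c}: use roles (b, c, a)
      obtain ⟨u, w, huw, hu, hw, ht⟩ :=
        pair_case hbc hab.symm hac.symm heig hout3 hb hc ha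
          (v0 := v0) (by rw [set_perm3]; exact hv0) hvb hvc hva
      rw [set_perm3] at hu hw
      exact ⟨u, w, huw, hu, hw, ht⟩
    · rw [show ew G v0 a = 0 from if_neg hva, show ew G v0 b = 1 from if_pos hvb,
        show ew G v0 c = 0 from if_neg hvc] at h0
      exact absurd (by linarith) hb
    · rw [show ew G v0 a = 0 from if_neg hva, show ew G v0 b = 0 from if_neg hvb,
        show ew G v0 c = 1 from if_pos hvc] at h0
      exact absurd (by linarith) hc
    · exact absurd hmix (by tauto)

/-- Two "twin" vertices form a perfect critical set via `e_u - e_v`. -/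
lemma twin_pcs (u v : V) (huv : u ≠ v)
    (h : ∀ w, w ≠ u → w ≠ v → (G.Adj w u ↔ G.Adj w v)) :
    IsPerfectCriticalSet G {u, v} := by
  classical
  set z : V → ℝ := fun w => if w = u then 1 else if w = v then -1 else 0 with hz
  have hzu : z u = 1 := by simp [hz]
  have hzv : z v = -1 := by simp [hz, huv.symm]
  have hzo : ∀ w, w ≠ u → w ≠ v → z w = 0 := fun w h1 h2 => by simp [hz, h1, h2]
  have hdeg : (G.degree u : ℝ) = (G.degree v : ℝ) := by
    rw [degree_sum u, degree_sum v]
    refine Fintype.sum_equiv (Equiv.swap u v) _ _ fun w => ?_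
    by_cases hwu : w = u
    · rw [hwu, Equiv.swap_apply_left, ew_self u, ew_self v]
    by_cases hwv : w = v
    · rw [hwv, Equiv.swap_apply_right]
      exact ew_symm u v
    · rw [Equiv.swap_apply_of_ne_of_ne hwu hwv]
      unfold ew
      by_cases hadj : G.Adj w u
      · rw [if_pos hadj.symm, if_pos ((h w hwu hwv).mp hadj).symm]
      · rw [if_neg (fun hc => hadj hc.symm),
          if_neg (fun hc => hadj ((h w hwu hwv).mpr hc.symm))]
  have hrestrict : ∀ w, ∑ x, ew G w x * z x = ∑ x ∈ ({u, v} : Finset V), ew G w x * z x := by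
    intro w
    refine (sum_subset (subset_univ _) fun x _ hx => ?_).symm
    simp only [mem_insert, mem_singleton, not_or] at hx
    rw [hzo x hx.1 hx.2, mul_zero]
  have hsum : ∀ w, ∑ x, ew G w x * z x = ew G w u - ew G w v := by
    intro w
    rw [hrestrict w, sum_pair huv, hzu, hzv]
    ring
  refine ⟨⟨u, by simp⟩, z, (G.degree u : ℝ) + ew G u v, ?_, ?_, ?_, ?_⟩
  · intro h0
    have : z u = 0 := congrFun h0 u
    rw [hzu] at this; norm_num at this
  · funext w
    rw [SimpleGraph.lapMatrix_mulVec_apply, neighbor_sum, hsum]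
    by_cases hwu : w = u
    · rw [hwu, hzu, ew_self u]
      simp only [Pi.smul_apply, smul_eq_mul, hzu]
      ring
    by_cases hwv : w = v
    · rw [hwv, hzv, ew_self v, ew_symm v u]
      simp only [Pi.smul_apply, smul_eq_mul, hzv]
      rw [← hdeg]
      ring
    · rw [hzo w hwu hwv]
      have hee : ew G w u = ew G w v := by
        unfold ew
        by_cases hadj : G.Adj w u
        · rw [if_pos hadj, if_pos ((h w hwu hwv).mp hadj)]
        · rw [if_neg hadj, if_neg (fun hc => hadj ((h w hwu hwv).mpr hc))]
      simp only [Pi.smul_apply, smul_eq_mul, hzo w hwu hwv, hee]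
      ring
  · intro w hw
    simp only [mem_insert, mem_singleton, not_or] at hw
    exact hzo w hw.1 hw.2
  · intro w hw
    simp only [mem_insert, mem_singleton] at hw
    rcases hw with rfl | rfl
    · rw [hzu]; norm_num
    · rw [hzv]; norm_num


end PCSAux

/-- **Theorem 3.** No three-element set of a connected graph is a minimal perfect critical
set: if `S` with `|S| = 3` is a perfect critical set, then some two-element (hence proper,
nonempty) subset of `S` is itself a perfect critical set. -/
theorem stmt_7 {V : Type*} [Fintype V] [DecidableEq V] (G : SimpleGraph V) [DecidableRel G.Adj]
    (hconn : G.Connected) (S : Finset V) (hS : S.card = 3) :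
    ¬ IsMinimalPerfectCriticalSet G S ∧
      (IsPerfectCriticalSet G S →
        ∃ T ⊂ S, T.card = 2 ∧ IsPerfectCriticalSet G T) := by
  classical
  have main : IsPerfectCriticalSet G S →
      ∃ T ⊂ S, T.card = 2 ∧ IsPerfectCriticalSet G T := by
    intro hPCS
    obtain ⟨a, b, c, hab, hac, hbc, rfl⟩ := Finset.card_eq_three.mp hS
    obtain ⟨hne, y, l, hy0, heig, hout, hsupp⟩ := hPCS
    obtain ⟨u, w, huw, hu, hw, ht⟩ := PCSAux.exists_twin hab hac hbc heig hout
      (hsupp a (by simp)) (hsupp b (by simp)) (hsupp c (by simp))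
    refine ⟨{u, w}, ?_, Finset.card_pair huw, PCSAux.twin_pcs u w huw ht⟩
    rw [ssubset_iff_subset_ne]
    constructor
    · intro x hx
      simp only [Finset.mem_insert, Finset.mem_singleton] at hx
      rcases hx with rfl | rfl
      · exact hu
      · exact hw
    · intro hEq
      have h3 : ({u, w} : Finset V).card = 3 := by rw [hEq]; exact hS
      rw [Finset.card_pair huw] at h3
      norm_num at h3
  exact ⟨fun hmin => by
    obtain ⟨T, hT, _, hTpcs⟩ := main hmin.1
    exact hmin.2 T hT hTpcs, main⟩
end

section
/- Let G be a finite connected simple undirected graph on vertex set V containing five distinct vertices v, a₁, a₂, b₁, b₂ such that: the only neighbor of a₂ is a₁; the only neighbors of a₁ are v and a₂; the only neighbor of b₂ is b₁; the only neighbors of b₁ are v and b₂ (i.e., two pendant paths of length 2 are attached at the common vertex v). Then S = {a₁, a₂, b₁, b₂} is a perfect critical set: the vector y with y_{a₁} = 1, y_{a₂} = (√5+1)/2, y_{b₁} = −1, y_{b₂} = −(√5+1)/2 and y_w = 0 for all other vertices w is an eigenvector of L(G) with eigenvalue (3−√5)/2. -/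
open Matrix

/-- **Theorem 4 (perfect criticality).** If two pendant paths of length 2,
`v — a₁ — a₂` and `v — b₁ — b₂`, are attached at a common vertex `v` of a connected
graph `G`, then `S = {a₁, a₂, b₁, b₂}` is a perfect critical set; indeed the vector
supported on `S` with values `1, (√5+1)/2, −1, −(√5+1)/2` is an eigenvector of the
Laplacian with eigenvalue `(3 − √5)/2`. -/
theorem stmt_8 {V : Type*} [Fintype V] [DecidableEq V] (G : SimpleGraph V) [DecidableRel G.Adj]
    (hconn : G.Connected) (v a₁ a₂ b₁ b₂ : V)
    (hdist : List.Pairwise (· ≠ ·) [v, a₁, a₂, b₁, b₂])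
    (ha₂ : G.neighborFinset a₂ = {a₁}) (ha₁ : G.neighborFinset a₁ = {v, a₂})
    (hb₂ : G.neighborFinset b₂ = {b₁}) (hb₁ : G.neighborFinset b₁ = {v, b₂}) :
    IsPerfectCriticalSet G {a₁, a₂, b₁, b₂} ∧
      G.lapMatrix ℝ *ᵥ (fun w => if w = a₁ then 1 else if w = a₂ then (Real.sqrt 5 + 1) / 2
          else if w = b₁ then -1 else if w = b₂ then -((Real.sqrt 5 + 1) / 2) else 0) =
        ((3 - Real.sqrt 5) / 2) •
          (fun w => if w = a₁ then 1 else if w = a₂ then (Real.sqrt 5 + 1) / 2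
            else if w = b₁ then -1 else if w = b₂ then -((Real.sqrt 5 + 1) / 2) else 0) := by
  simp only [List.pairwise_cons, List.mem_cons, List.not_mem_nil, or_false,
    List.mem_singleton, forall_eq_or_imp, forall_eq, List.Pairwise.nil, and_true] at hdist
  obtain ⟨⟨hva1, hva2, hvb1, hvb2⟩, ⟨ha1a2, ha1b1, ha1b2⟩, ⟨ha2b1, ha2b2⟩, hb1b2, -⟩ := hdist
  set φ : ℝ := (Real.sqrt 5 + 1) / 2 with hφ
  set l : ℝ := (3 - Real.sqrt 5) / 2 with hl
  set y : V → ℝ := fun w => if w = a₁ then 1 else if w = a₂ then φ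
      else if w = b₁ then -1 else if w = b₂ then -φ else 0 with hy
  have h5 : Real.sqrt 5 ^ 2 = 5 := Real.sq_sqrt (by norm_num)
  have h5pos : (0:ℝ) < Real.sqrt 5 := Real.sqrt_pos.mpr (by norm_num)
  have hφpos : 0 < φ := by rw [hφ]; positivity
  -- values of y
  have ya1 : y a₁ = 1 := by simp [hy]
  have ya2 : y a₂ = φ := by simp [hy, ha1a2.symm]
  have yb1 : y b₁ = -1 := by simp [hy, ha1b1.symm, ha2b1.symm]
  have yb2 : y b₂ = -φ := by simp [hy, ha1b2.symm, ha2b2.symm, hb1b2.symm]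
  have yv : y v = 0 := by simp [hy, hva1, hva2, hvb1, hvb2]
  have yother : ∀ w, w ≠ a₁ → w ≠ a₂ → w ≠ b₁ → w ≠ b₂ → y w = 0 := by
    intro w h1 h2 h3 h4; simp [hy, h1, h2, h3, h4]
  -- adjacency characterizations
  have nA2 : ∀ u, G.Adj a₂ u ↔ u = a₁ := fun u => by
    rw [← SimpleGraph.mem_neighborFinset, ha₂, Finset.mem_singleton]
  have nA1 : ∀ u, G.Adj a₁ u ↔ u = v ∨ u = a₂ := fun u => by
    rw [← SimpleGraph.mem_neighborFinset, ha₁, Finset.mem_insert, Finset.mem_singleton]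
  have nB2 : ∀ u, G.Adj b₂ u ↔ u = b₁ := fun u => by
    rw [← SimpleGraph.mem_neighborFinset, hb₂, Finset.mem_singleton]
  have nB1 : ∀ u, G.Adj b₁ u ↔ u = v ∨ u = b₂ := fun u => by
    rw [← SimpleGraph.mem_neighborFinset, hb₁, Finset.mem_insert, Finset.mem_singleton]
  -- degrees
  have dA2 : G.degree a₂ = 1 := by rw [← SimpleGraph.card_neighborFinset_eq_degree, ha₂]; simp
  have dB2 : G.degree b₂ = 1 := by rw [← SimpleGraph.card_neighborFinset_eq_degree, hb₂]; simp
  have dA1 : G.degree a₁ = 2 := by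
    rw [← SimpleGraph.card_neighborFinset_eq_degree, ha₁, Finset.card_insert_of_notMem
      (by simp [hva2]), Finset.card_singleton]
  have dB1 : G.degree b₁ = 2 := by
    rw [← SimpleGraph.card_neighborFinset_eq_degree, hb₁, Finset.card_insert_of_notMem
      (by simp [hvb2]), Finset.card_singleton]
  -- key eigenvector equation
  have key : G.lapMatrix ℝ *ᵥ y = l • y := by
    funext w
    rw [SimpleGraph.lapMatrix_mulVec_apply]
    by_cases hw1 : w = a₁
    · subst hw1
      rw [dA1, ha₁, Finset.sum_pair hva2, ya1, yv, ya2, Pi.smul_apply, ya1, smul_eq_mul,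
        hφ, hl]
      ring
    by_cases hw2 : w = a₂
    · subst hw2
      rw [dA2, ha₂, Finset.sum_singleton, ya1, ya2, Pi.smul_apply, ya2, smul_eq_mul, hφ, hl]
      nlinarith [h5]
    by_cases hw3 : w = b₁
    · subst hw3
      rw [dB1, hb₁, Finset.sum_pair hvb2, yb1, yv, yb2, Pi.smul_apply, yb1, smul_eq_mul,
        hφ, hl]
      ring
    by_cases hw4 : w = b₂
    · subst hw4
      rw [dB2, hb₂, Finset.sum_singleton, yb1, yb2, Pi.smul_apply, yb2, smul_eq_mul, hφ, hl]
      nlinarith [h5]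
    have hyw : y w = 0 := yother w hw1 hw2 hw3 hw4
    have hsum : ∑ u ∈ G.neighborFinset w, y u = 0 := by
      by_cases hwv : w = v
      · subst hwv
        have hna2 : a₂ ∉ G.neighborFinset w := by
          rw [SimpleGraph.mem_neighborFinset]
          intro h
          exact hva1 ((nA2 w).mp h.symm)
        have hnb2 : b₂ ∉ G.neighborFinset w := by
          rw [SimpleGraph.mem_neighborFinset]
          intro h
          exact hvb1 ((nB2 w).mp h.symm)
        have hma1 : a₁ ∈ G.neighborFinset w := by
          rw [SimpleGraph.mem_neighborFinset]
          exact ((nA1 w).mpr (Or.inl rfl)).symm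
        have hmb1 : b₁ ∈ G.neighborFinset w := by
          rw [SimpleGraph.mem_neighborFinset]
          exact ((nB1 w).mpr (Or.inl rfl)).symm
        have hcong : ∀ u ∈ G.neighborFinset w,
            y u = (if u = a₁ then (1:ℝ) else 0) + (if u = b₁ then (-1:ℝ) else 0) := by
          intro u hu
          have hu2 : u ≠ a₂ := fun h => hna2 (h ▸ hu)
          have hu4 : u ≠ b₂ := fun h => hnb2 (h ▸ hu)
          by_cases h1 : u = a₁
          · subst h1; simp [ya1, ha1b1]
          by_cases h3 : u = b₁
          · subst h3; simp [yb1, h1]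
          simp [yother u h1 hu2 h3 hu4, h1, h3]
        rw [Finset.sum_congr rfl hcong, Finset.sum_add_distrib,
          Finset.sum_ite_eq' _ a₁ (fun _ => (1:ℝ)), Finset.sum_ite_eq' _ b₁ (fun _ => (-1:ℝ)),
          if_pos hma1, if_pos hmb1]
        ring
      · apply Finset.sum_eq_zero
        intro u hu
        rw [SimpleGraph.mem_neighborFinset] at hu
        have hu1 : u ≠ a₁ := by
          rintro rfl
          rcases (nA1 w).mp hu.symm with rfl | rfl
          · exact hwv rfl
          · exact hw2 rfl
        have hu2 : u ≠ a₂ := by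
          rintro rfl
          exact hw1 ((nA2 w).mp hu.symm)
        have hu3 : u ≠ b₁ := by
          rintro rfl
          rcases (nB1 w).mp hu.symm with rfl | rfl
          · exact hwv rfl
          · exact hw4 rfl
        have hu4 : u ≠ b₂ := by
          rintro rfl
          exact hw3 ((nB2 w).mp hu.symm)
        exact yother u hu1 hu2 hu3 hu4
    rw [hyw, hsum, Pi.smul_apply, hyw, smul_eq_mul]
    ring
  refine ⟨⟨⟨a₁, by simp⟩, y, l, ?_, key, ?_, ?_⟩, key⟩
  · intro h
    have := congrFun h a₁
    rw [ya1] at this; simp at this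
  · intro w hw
    simp only [Finset.mem_insert, Finset.mem_singleton, not_or] at hw
    exact yother w hw.1 hw.2.1 hw.2.2.1 hw.2.2.2
  · intro w hw
    simp only [Finset.mem_insert, Finset.mem_singleton] at hw
    rcases hw with rfl | rfl | rfl | rfl
    · rw [ya1]; norm_num
    · rw [ya2]; exact ne_of_gt hφpos
    · rw [yb1]; norm_num
    · rw [yb2]; exact neg_ne_zero.mpr (ne_of_gt hφpos)
end

section
/- Let G be a finite connected simple undirected graph on vertex set V containing five distinct vertices v, a₁, a₂, b₁, b₂ such that: the only neighbor of a₂ is a₁; the only neighbors of a₁ are v and a₂; the only neighbor of b₂ is b₁; the only neighbors of b₁ are v and b₂. Then S = {a₁, a₂, b₁, b₂} is a minimal perfect critical set: S is a perfect critical set and no proper nonempty subset of S is a perfect critical set. -/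
open Matrix

/-- **Theorem 4.** If two pendant paths of length 2, `v — a₁ — a₂` and `v — b₁ — b₂`, are
attached at a common vertex `v` of a connected graph `G`, then `S = {a₁, a₂, b₁, b₂}` is a
minimal perfect critical set. -/
theorem stmt_9 {V : Type*} [Fintype V] [DecidableEq V] (G : SimpleGraph V) [DecidableRel G.Adj]
    (hconn : G.Connected) (v a₁ a₂ b₁ b₂ : V)
    (hdist : List.Pairwise (· ≠ ·) [v, a₁, a₂, b₁, b₂])
    (ha₂ : G.neighborFinset a₂ = {a₁}) (ha₁ : G.neighborFinset a₁ = {v, a₂})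
    (hb₂ : G.neighborFinset b₂ = {b₁}) (hb₁ : G.neighborFinset b₁ = {v, b₂}) :
    IsMinimalPerfectCriticalSet G {a₁, a₂, b₁, b₂} := by
  classical
  simp only [List.pairwise_cons, List.mem_cons, List.not_mem_nil] at hdist
  obtain ⟨hv, hA1, hA2, hB1, -⟩ := hdist
  have hva₁ : v ≠ a₁ := hv a₁ (by tauto)
  have hva₂ : v ≠ a₂ := hv a₂ (by tauto)
  have hvb₁ : v ≠ b₁ := hv b₁ (by tauto)
  have hvb₂ : v ≠ b₂ := hv b₂ (by tauto)
  have ha₁a₂ : a₁ ≠ a₂ := hA1 a₂ (by tauto)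
  have ha₁b₁ : a₁ ≠ b₁ := hA1 b₁ (by tauto)
  have ha₁b₂ : a₁ ≠ b₂ := hA1 b₂ (by tauto)
  have ha₂b₁ : a₂ ≠ b₁ := hA2 b₁ (by tauto)
  have ha₂b₂ : a₂ ≠ b₂ := hA2 b₂ (by tauto)
  have hb₁b₂ : b₁ ≠ b₂ := hB1 b₂ (by tauto)
  -- adjacency characterizations
  have adj_a₂ : ∀ w, G.Adj a₂ w ↔ w = a₁ := fun w => by
    rw [← SimpleGraph.mem_neighborFinset, ha₂, Finset.mem_singleton]
  have adj_a₁ : ∀ w, G.Adj a₁ w ↔ w = v ∨ w = a₂ := fun w => by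
    rw [← SimpleGraph.mem_neighborFinset, ha₁, Finset.mem_insert, Finset.mem_singleton]
  have adj_b₂ : ∀ w, G.Adj b₂ w ↔ w = b₁ := fun w => by
    rw [← SimpleGraph.mem_neighborFinset, hb₂, Finset.mem_singleton]
  have adj_b₁ : ∀ w, G.Adj b₁ w ↔ w = v ∨ w = b₂ := fun w => by
    rw [← SimpleGraph.mem_neighborFinset, hb₁, Finset.mem_insert, Finset.mem_singleton]
  -- degrees
  have deg_a₂ : G.degree a₂ = 1 := by rw [← SimpleGraph.card_neighborFinset_eq_degree, ha₂]; simp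
  have deg_b₂ : G.degree b₂ = 1 := by rw [← SimpleGraph.card_neighborFinset_eq_degree, hb₂]; simp
  have deg_a₁ : G.degree a₁ = 2 := by
    rw [← SimpleGraph.card_neighborFinset_eq_degree, ha₁, Finset.card_pair hva₂]
  have deg_b₁ : G.degree b₁ = 2 := by
    rw [← SimpleGraph.card_neighborFinset_eq_degree, hb₁, Finset.card_pair hvb₂]
  have hmemS : ∀ w : V, w ∈ ({a₁, a₂, b₁, b₂} : Finset V) ↔
      w = a₁ ∨ w = a₂ ∨ w = b₁ ∨ w = b₂ := fun w => by
    simp [Finset.mem_insert, Finset.mem_singleton]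
  constructor
  · -- S is a perfect critical set
    refine ⟨⟨a₁, by simp⟩, ?_⟩
    set t : ℝ := (Real.sqrt 5 - 1) / 2 with ht_def
    have h5 : Real.sqrt 5 ^ 2 = 5 := Real.sq_sqrt (by norm_num)
    have ht2 : t * t = 1 - t := by
      rw [ht_def]; nlinarith [h5]
    have ht_pos : 0 < t := by
      have : (1:ℝ) < Real.sqrt 5 := by
        nlinarith [Real.sqrt_nonneg 5, h5]
      rw [ht_def]; linarith
    set y : V → ℝ := fun u =>
      if u = a₁ then t else if u = a₂ then 1 else if u = b₁ then -t else if u = b₂ then -1 else 0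
      with hy_def
    have hya₁ : y a₁ = t := by simp [hy_def]
    have hya₂ : y a₂ = 1 := by simp [hy_def, ha₁a₂.symm]
    have hyb₁ : y b₁ = -t := by simp [hy_def, ha₁b₁.symm, ha₂b₁.symm]
    have hyb₂ : y b₂ = -1 := by simp [hy_def, ha₁b₂.symm, ha₂b₂.symm, hb₁b₂.symm]
    have hy_other : ∀ u, u ≠ a₁ → u ≠ a₂ → u ≠ b₁ → u ≠ b₂ → y u = 0 := by
      intro u h1 h2 h3 h4; simp [hy_def, h1, h2, h3, h4]
    have hyv : y v = 0 := hy_other v hva₁ hva₂ hvb₁ hvb₂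
    refine ⟨y, 1 - t, ?_, ?_, ?_, ?_⟩
    · intro h0
      have := congrFun h0 a₂
      rw [hya₂] at this; simp at this
    · funext u
      rw [SimpleGraph.lapMatrix_mulVec_apply, Pi.smul_apply, smul_eq_mul]
      by_cases h1 : u = a₁
      · subst h1
        rw [deg_a₁, ha₁, Finset.sum_pair hva₂, hya₁, hyv, hya₂]
        push_cast; linarith [ht2]
      by_cases h2 : u = a₂
      · subst h2
        rw [deg_a₂, ha₂, Finset.sum_singleton, hya₂, hya₁]
        push_cast; linarith
      by_cases h3 : u = b₁
      · subst h3
        rw [deg_b₁, hb₁, Finset.sum_pair hvb₂, hyb₁, hyv, hyb₂]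
        push_cast; nlinarith [ht2]
      by_cases h4 : u = b₂
      · subst h4
        rw [deg_b₂, hb₂, Finset.sum_singleton, hyb₂, hyb₁]
        push_cast; linarith
      · -- u is not a₁,a₂,b₁,b₂; y u = 0 and all neighbors have y = 0 except possibly a₁,b₁ cancel
        have hyu : y u = 0 := hy_other u h1 h2 h3 h4
        rw [hyu, mul_zero, mul_zero, zero_sub, neg_eq_zero]
        by_cases h0 : u = v
        · subst h0
          have hsub : ({a₁, b₁} : Finset V) ⊆ G.neighborFinset u := by
            intro w hw
            rw [Finset.mem_insert, Finset.mem_singleton] at hw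
            rw [SimpleGraph.mem_neighborFinset]
            rcases hw with rfl | rfl
            · exact ((adj_a₁ u).mpr (Or.inl rfl)).symm
            · exact ((adj_b₁ u).mpr (Or.inl rfl)).symm
          rw [← Finset.sum_subset hsub]
          · rw [Finset.sum_pair ha₁b₁, hya₁, hyb₁]; ring
          · intro w hw hwn
            rw [Finset.mem_insert, Finset.mem_singleton] at hwn
            push_neg at hwn
            rw [SimpleGraph.mem_neighborFinset] at hw
            refine hy_other w hwn.1 ?_ hwn.2 ?_
            · rintro rfl; exact hva₁ ((adj_a₂ u).mp hw.symm)
            · rintro rfl; exact hvb₁ ((adj_b₂ u).mp hw.symm)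
        · apply Finset.sum_eq_zero
          intro w hw
          rw [SimpleGraph.mem_neighborFinset] at hw
          refine hy_other w ?_ ?_ ?_ ?_
          · rintro rfl
            rcases (adj_a₁ u).mp hw.symm with rfl | rfl
            exacts [h0 rfl, h2 rfl]
          · rintro rfl; exact h1 ((adj_a₂ u).mp hw.symm)
          · rintro rfl
            rcases (adj_b₁ u).mp hw.symm with rfl | rfl
            exacts [h0 rfl, h4 rfl]
          · rintro rfl; exact h3 ((adj_b₂ u).mp hw.symm)
    · intro w hw
      refine hy_other w ?_ ?_ ?_ ?_ <;> rintro rfl <;> exact hw ((hmemS _).mpr (by tauto))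
    · intro w hw
      rcases (hmemS w).mp hw with rfl | rfl | rfl | rfl
      · rw [hya₁]; exact ne_of_gt ht_pos
      · rw [hya₂]; norm_num
      · rw [hyb₁]; exact ne_of_lt (by linarith)
      · rw [hyb₂]; norm_num
  · -- minimality
    rintro T hT ⟨hTne, y, l, hy0, heig, hout, hin⟩
    have hTS := hT.subset
    have houtS : ∀ w : V, w ≠ a₁ → w ≠ a₂ → w ≠ b₁ → w ≠ b₂ → y w = 0 := by
      intro w h1 h2 h3 h4
      refine hout w (fun hmem => ?_)
      rcases (hmemS w).mp (hTS hmem) with rfl | rfl | rfl | rfl <;> tauto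
    have hyv : y v = 0 := houtS v hva₁ hva₂ hvb₁ hvb₂
    have E : ∀ u, (G.degree u : ℝ) * y u - ∑ w ∈ G.neighborFinset u, y w = l * y u := by
      intro u
      have := congrFun heig u
      rwa [SimpleGraph.lapMatrix_mulVec_apply, Pi.smul_apply, smul_eq_mul] at this
    have Ea₂ := E a₂
    rw [deg_a₂, ha₂, Finset.sum_singleton] at Ea₂; push_cast at Ea₂
    -- y a₁ = (1 - l) * y a₂
    have Ea₁ := E a₁
    rw [deg_a₁, ha₁, Finset.sum_pair hva₂, hyv] at Ea₁; push_cast at Ea₁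
    have Eb₂ := E b₂
    rw [deg_b₂, hb₂, Finset.sum_singleton] at Eb₂; push_cast at Eb₂
    have Eb₁ := E b₁
    rw [deg_b₁, hb₁, Finset.sum_pair hvb₂, hyv] at Eb₁; push_cast at Eb₁
    -- equation at v gives y a₁ + y b₁ = 0
    have Ev : y a₁ + y b₁ = 0 := by
      have Ev0 := E v
      rw [hyv, mul_zero, mul_zero, zero_sub, neg_eq_zero] at Ev0
      have hsub : ({a₁, b₁} : Finset V) ⊆ G.neighborFinset v := by
        intro w hw
        rw [Finset.mem_insert, Finset.mem_singleton] at hw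
        rw [SimpleGraph.mem_neighborFinset]
        rcases hw with rfl | rfl
        · exact ((adj_a₁ v).mpr (Or.inl rfl)).symm
        · exact ((adj_b₁ v).mpr (Or.inl rfl)).symm
      rw [← Finset.sum_subset hsub, Finset.sum_pair ha₁b₁] at Ev0
      · exact Ev0
      · intro w hw hwn
        rw [Finset.mem_insert, Finset.mem_singleton] at hwn
        push_neg at hwn
        rw [SimpleGraph.mem_neighborFinset] at hw
        refine houtS w hwn.1 ?_ hwn.2 ?_
        · rintro rfl; exact hva₁ ((adj_a₂ v).mp hw.symm)
        · rintro rfl; exact hvb₁ ((adj_b₂ v).mp hw.symm)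
    by_cases hA : y a₂ = 0
    · -- then all of y vanishes on S, contradicting nonemptiness of T
      have h1 : y a₁ = 0 := by linear_combination (1 - l) * hA - Ea₂
      have h3 : y b₁ = 0 := by linear_combination Ev - h1
      have h4 : y b₂ = 0 := by linear_combination (2 - l) * h3 - Eb₁
      obtain ⟨w, hw⟩ := hTne
      have := hin w hw
      rcases (hmemS w).mp (hTS hw) with rfl | rfl | rfl | rfl <;> tauto
    · -- then all four values are nonzero, so T = S, contradicting strictness
      have h1 : y a₁ ≠ 0 := by
        intro h; apply hA; linear_combination (2 - l) * h - Ea₁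
      have h3 : y b₁ ≠ 0 := by
        intro h; apply h1; linarith [Ev]
      have hl2 : (2 - l) * y a₁ = y a₂ := by linear_combination Ea₁
      have hl2' : (2 - l) ≠ 0 := by
        intro h; apply hA; rw [← hl2, h, zero_mul]
      have h4 : y b₂ ≠ 0 := by
        intro h
        apply h3
        have : (2 - l) * y b₁ = y b₂ := by linear_combination Eb₁
        rw [h] at this
        exact (mul_eq_zero.mp this).resolve_left hl2'
      have hmemT : ∀ w : V, y w ≠ 0 → w ∈ T := by
        intro w hw
        by_contra hmem
        exact hw (hout w hmem)
      apply hT.not_subset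
      intro w hw
      rcases (hmemS w).mp hw with rfl | rfl | rfl | rfl
      exacts [hmemT _ h1, hmemT _ hA, hmemT _ h3, hmemT _ h4]
end

section
/- Let P_n be the path graph on vertices v₁, v₂, …, v_n (with v_i adjacent to v_{i+1} for 1 ≤ i ≤ n−1) and let L be its Laplacian. If y ∈ ℝ^n is a nonzero vector with Ly = λy for some real λ, then y_{v₁} ≠ 0. Consequently the path is controllable when the end vertex v₁ is selected as the single leader. -/
open Matrix

/-- The path graph on `n` vertices `0, 1, …, n−1`, with `i` adjacent to `i+1`. -/
def pathG (n : ℕ) : SimpleGraph (Fin n) where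
  Adj i j := (i : ℕ) + 1 = j ∨ (j : ℕ) + 1 = i
  symm := ⟨by intro i j h; tauto⟩
  loopless := ⟨by intro i h; omega⟩

instance (n : ℕ) : DecidableRel (pathG n).Adj :=
  fun i j => inferInstanceAs (Decidable (_ ∨ _))

/-! An eigenvector of the Laplacian vanishing at the end vertex `v₁` vanishes everywhere: reading
the eigenvalue equation at `v_k`, the value at `v_{k+1}` is a combination of the values at `v_k` and
`v_{k-1}`, so the zeros propagate along the path ("zero forcing"). -/

namespace SimpleGraph

variable {V : Type*} [Fintype V] [DecidableEq V] (G : SimpleGraph V) [DecidableRel G.Adj]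

theorem sum_neighborFinset_of_lapMatrix_mulVec_eq_smul {y : V → ℝ} {l : ℝ}
    (h : G.lapMatrix ℝ *ᵥ y = l • y) (v : V) :
    ∑ u ∈ G.neighborFinset v, y u = (G.degree v - l) * y v := by
  have hv := congrFun h v
  rw [lapMatrix_mulVec_apply, Pi.smul_apply, smul_eq_mul] at hv
  linarith

theorem lapMatrix_eigenvector_forces_zero {y : V → ℝ} {l : ℝ}
    (h : G.lapMatrix ℝ *ᵥ y = l • y) {v w : V} (hv : y v = 0) (hvw : G.Adj v w)
    (hothers : ∀ u, G.Adj v u → u ≠ w → y u = 0) : y w = 0 := by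
  have hsum := G.sum_neighborFinset_of_lapMatrix_mulVec_eq_smul h v
  rwa [hv, mul_zero, Finset.sum_eq_single_of_mem w ((G.mem_neighborFinset v w).2 hvw)
    fun u hu huw => hothers u ((G.mem_neighborFinset v u).1 hu) huw] at hsum

end SimpleGraph

theorem pathG_eigenvector_eq_zero_of_apply_zero {n : ℕ} (hn : 0 < n) {y : Fin n → ℝ} {l : ℝ}
    (h : (pathG n).lapMatrix ℝ *ᵥ y = l • y) (h0 : y ⟨0, hn⟩ = 0) : y = 0 := by
  have hinit : ∀ m, ∀ i : Fin n, (i : ℕ) ≤ m → y i = 0 := by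
    intro m
    induction m with
    | zero =>
      intro i hi
      rwa [show i = ⟨0, hn⟩ from Fin.ext (Nat.le_zero.1 hi)]
    | succ k ih =>
      intro i hi
      rcases Nat.lt_or_eq_of_le hi with hlt | heq
      · exact ih i (Nat.lt_succ_iff.1 hlt)
      · have hk : k < n := by omega
        refine (pathG n).lapMatrix_eigenvector_forces_zero h (v := ⟨k, hk⟩)
          (ih _ le_rfl) (Or.inl heq.symm) fun u hu hui => ih u ?_
        rcases hu with hu | hu
        · exact absurd (Fin.ext (hu.symm.trans heq.symm)) hui
        · exact (Nat.le_succ _).trans (le_of_eq hu)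
  funext i
  exact hinit i i le_rfl

/-- Every Laplacian eigenvector of the path graph `P_n` is nonzero at the end vertex
`v₁`; consequently the path is controllable with the end vertex as single leader. -/
theorem stmt_11 (n : ℕ) (hn : 0 < n) (y : Fin n → ℝ) (l : ℝ) (hy : y ≠ 0)
    (h : (pathG n).lapMatrix ℝ *ᵥ y = l • y) :
    y ⟨0, hn⟩ ≠ 0 :=
  fun h0 => hy (pathG_eigenvector_eq_zero_of_apply_zero hn h h0)
end
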